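/- arXiv:hep-th/9812151 — 6 statements merged into one kernel-verified Lean document; each statement's English description precedes it below -/
import Mathlib

section
/- Let α, β be scalars in k with α² ≠ β². Then the element α·P − β·C is a unit of A, with inverse (α² − β²)⁻¹·(α·P⁻¹ + β·P⁻²·C). (This is the inversion formula (α∂ − β[D,D̄])⁻¹ = (α² − β²)⁻¹(α∂⁻¹ + β[D,D̄]⁻¹) for α ≠ ±β, together with its covariant analogue.) -/
/-- Let `k` be a field and `A` an associative unital `k`-algebra.
Given `d, d̄ ∈ A` with `d² = 0`, `d̄² = 0`, set `P := d·d̄ + d̄·d` and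
`C := d·d̄ − d̄·d`, and assume `P` is a unit (witnessed by `u : Aˣ`).  For scalars
`α, β ∈ k` with `α² ≠ β²`, the element `α·P − β·C` is a unit of `A`, with inverse
`(α² − β²)⁻¹·(α·P⁻¹ + β·P⁻²·C)`.
(This is `(α∂ − β[D,D̄])⁻¹ = (α² − β²)⁻¹(α∂⁻¹ + β[D,D̄]⁻¹)` for `α ≠ ±β`.) -/
theorem alpha_P_minus_beta_C_inverse
    {k : Type*} [Field k] {A : Type*} [Ring A] [Algebra k A]
    (d db : A) (hd : d ^ 2 = 0) (hdb : db ^ 2 = 0)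
    (u : Aˣ) (hu : (u : A) = d * db + db * d)
    (α β : k) (hαβ : α ^ 2 ≠ β ^ 2) :
    ∃ v : Aˣ, (v : A) = α • (d * db + db * d) - β • (d * db - db * d) ∧
      ((v⁻¹ : Aˣ) : A) =
        (α ^ 2 - β ^ 2)⁻¹ •
          (α • ((u⁻¹ : Aˣ) : A) +
            β • (((u⁻¹ : Aˣ) : A) ^ 2 * (d * db - db * d))) := by
  set C : A := d * db - db * d with hC
  have hd' : d * d = 0 := by rw [← sq]; exact hd
  have hdb' : db * db = 0 := by rw [← sq]; exact hdb
  have hdd : ∀ x : A, d * (d * x) = 0 := fun x => by rw [← mul_assoc, hd', zero_mul]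
  have hdbdb : ∀ x : A, db * (db * x) = 0 := fun x => by rw [← mul_assoc, hdb', zero_mul]
  have hCu : C * (u : A) = (u : A) * C := by
    rw [hu, hC]
    simp only [mul_add, add_mul, mul_sub, sub_mul, mul_assoc, hdd, hdbdb, mul_zero]
    abel
  have hCuinv : C * ((u⁻¹ : Aˣ) : A) = ((u⁻¹ : Aˣ) : A) * C := by
    have : Commute C (u : A) := hCu
    exact this.units_inv_right
  have hCC : C * C = (u : A) * (u : A) := by
    rw [hu, hC]
    simp only [mul_add, add_mul, mul_sub, sub_mul, mul_assoc, hdd, hdbdb, mul_zero]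
    abel
  have hne : α ^ 2 - β ^ 2 ≠ 0 := sub_ne_zero.mpr hαβ
  set w : A := (α ^ 2 - β ^ 2)⁻¹ •
      (α • ((u⁻¹ : Aˣ) : A) + β • (((u⁻¹ : Aˣ) : A) ^ 2 * C)) with hw
  have key1 : (α • (u : A) - β • C) *
      (α • ((u⁻¹ : Aˣ) : A) + β • (((u⁻¹ : Aˣ) : A) ^ 2 * C)) = (α ^ 2 - β ^ 2) • 1 := by
    have e1 : (u : A) * (((u⁻¹ : Aˣ) : A) ^ 2 * C) = ((u⁻¹ : Aˣ) : A) * C := by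
      rw [sq, mul_assoc ((u⁻¹:Aˣ):A), ← mul_assoc, Units.mul_inv, one_mul]
    have e2 : C * (((u⁻¹ : Aˣ) : A) ^ 2 * C) = 1 := by
      rw [sq, mul_assoc, ← mul_assoc C, hCuinv, mul_assoc, ← mul_assoc C, hCuinv,
        mul_assoc, hCC, ← mul_assoc, ← mul_assoc]
      simp
    rw [sub_mul, mul_add, mul_add, smul_mul_smul_comm, smul_mul_smul_comm,
      smul_mul_smul_comm, smul_mul_smul_comm, Units.mul_inv, e1, e2,
      ← hCuinv, mul_comm β α]
    rw [sub_smul, ← sq, ← sq]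
    abel
  have key2 : (α • ((u⁻¹ : Aˣ) : A) + β • (((u⁻¹ : Aˣ) : A) ^ 2 * C)) *
      (α • (u : A) - β • C) = (α ^ 2 - β ^ 2) • 1 := by
    have e1 : (((u⁻¹ : Aˣ) : A) ^ 2 * C) * (u : A) = ((u⁻¹ : Aˣ) : A) * C := by
      rw [mul_assoc, hCu, sq, mul_assoc, ← mul_assoc ((u⁻¹:Aˣ):A) (u:A), Units.inv_mul, one_mul]
    have e2 : (((u⁻¹ : Aˣ) : A) ^ 2 * C) * C = 1 := by
      rw [mul_assoc, hCC, sq, mul_assoc, ← mul_assoc ((u⁻¹:Aˣ):A) (u:A), Units.inv_mul, one_mul,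
        Units.inv_mul]
    rw [add_mul, mul_sub, mul_sub, smul_mul_smul_comm, smul_mul_smul_comm,
      smul_mul_smul_comm, smul_mul_smul_comm, Units.inv_mul, e1, e2,
      mul_comm β α]
    rw [sub_smul, ← sq, ← sq]
    abel
  have hval : (α • (u : A) - β • C) * w = 1 := by
    rw [hw, mul_smul_comm, key1, smul_smul, inv_mul_cancel₀ hne, one_smul]
  have hinv : w * (α • (u : A) - β • C) = 1 := by
    rw [hw, smul_mul_assoc, key2, smul_smul, inv_mul_cancel₀ hne, one_smul]
  refine ⟨⟨α • (u : A) - β • C, w, hval, hinv⟩, by simp [hu, hC], rfl⟩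
end

section
/- Let p, q be scalars in k with p ≠ 0 and q ≠ 0, and let n ∈ ℤ. Define L := P^{n−1}·(q·d·d̄ − p·d̄·d) and L′ := P^{−n−1}·(−p·d·d̄ + q·d̄·d) (where P^{m} denotes the m-th power of the unit P). Then L·L′ = −pq·1 = L′·L; in particular L is a unit of A with inverse L⁻¹ = −(pq)⁻¹·L′. (This realizes the inversion property L_{p,q}⁻¹ = −(1/pq)·L_{−q,−p} of the Bol pseudodifferential symbols L_{p,q}(𝓡) = {∇,∇̄}^{n−1}(q∇∇̄ − p∇̄∇) of order n = −(p+q).) -/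
/-- Let `k` be a field and `A` an associative unital `k`-algebra.
Given `d, d̄ ∈ A` with `d² = 0`, `d̄² = 0`, set `P := d·d̄ + d̄·d` (a unit, witnessed
by `u : Aˣ`).  For scalars `p, q ∈ k` with `p ≠ 0`, `q ≠ 0` and `n ∈ ℤ`, define
`L := P^{n−1}·(q·d·d̄ − p·d̄·d)` and `L′ := P^{−n−1}·(−p·d·d̄ + q·d̄·d)`.  Then
`L·L′ = −pq·1 = L′·L`; in particular `L` is a unit of `A` with inverse
`L⁻¹ = −(pq)⁻¹·L′`.  (Inversion property `L_{p,q}⁻¹ = −(1/pq)·L_{−q,−p}` of the Bol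
pseudodifferential symbols.) -/
theorem bol_symbol_inversion
    {k : Type*} [Field k] {A : Type*} [Ring A] [Algebra k A]
    (d db : A) (hd : d ^ 2 = 0) (hdb : db ^ 2 = 0)
    (u : Aˣ) (hu : (u : A) = d * db + db * d)
    (p q : k) (hp : p ≠ 0) (hq : q ≠ 0) (n : ℤ)
    (L L' : A)
    (hL : L = ((u ^ (n - 1) : Aˣ) : A) * (q • (d * db) - p • (db * d)))
    (hL' : L' = ((u ^ (-n - 1) : Aˣ) : A) * ((-p) • (d * db) + q • (db * d))) :
    L * L' = (-(p * q)) • (1 : A) ∧ L' * L = (-(p * q)) • (1 : A) ∧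
    ∃ v : Aˣ, (v : A) = L ∧ ((v⁻¹ : Aˣ) : A) = (-(p * q)⁻¹) • L' := by
  have hpq : p * q ≠ 0 := mul_ne_zero hp hq
  set e := d * db with he
  set f := db * d with hf
  have hef : e * f = 0 := by
    rw [he, hf, mul_assoc, ← mul_assoc db db, ← sq, hdb, zero_mul, mul_zero]
  have hfe : f * e = 0 := by
    rw [he, hf, mul_assoc, ← mul_assoc d d, ← sq, hd, zero_mul, mul_zero]
  have hce : Commute e (u : A) := by
    rw [hu]
    show e * (e + f) = (e + f) * e
    rw [mul_add, add_mul, hef, hfe]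
  have hcf : Commute f (u : A) := by
    rw [hu]
    show f * (e + f) = (e + f) * f
    rw [mul_add, add_mul, hef, hfe]
  have hX : ∀ m : ℤ, Commute (q • e - p • f) ((u ^ m : Aˣ) : A) := fun m =>
    ((hce.smul_left q).sub_left (hcf.smul_left p)).units_zpow_right _
  have hY : ∀ m : ℤ, Commute ((-p) • e + q • f) ((u ^ m : Aˣ) : A) := fun m =>
    ((hce.smul_left (-p)).add_left (hcf.smul_left q)).units_zpow_right _
  have hu2 : (u : A) * (u : A) = e * e + f * f := by
    rw [hu, add_mul, mul_add, mul_add, hef, hfe]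
    abel
  have hXY : (q • e - p • f) * ((-p) • e + q • f) = (-(p * q)) • ((u : A) * (u : A)) := by
    rw [hu2, sub_mul, mul_add, mul_add, smul_mul_smul_comm, smul_mul_smul_comm, smul_mul_smul_comm,
      smul_mul_smul_comm, hef, hfe, smul_zero, smul_zero, smul_add]
    module
  have hYX : ((-p) • e + q • f) * (q • e - p • f) = (-(p * q)) • ((u : A) * (u : A)) := by
    rw [hu2, add_mul, mul_sub, mul_sub, smul_mul_smul_comm, smul_mul_smul_comm, smul_mul_smul_comm,
      smul_mul_smul_comm, hef, hfe, smul_zero, smul_zero, smul_add]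
    module
  have hcollapse : ∀ (a b : ℤ) (Z : A), a + b = -2 →
      ((u ^ a : Aˣ) : A) * (((u ^ b : Aˣ) : A) * ((-(p*q)) • ((u:A)*(u:A)))) = (-(p*q)) • 1 := by
    intro a b Z hab
    rw [mul_smul_comm, mul_smul_comm, ← mul_assoc, ← Units.val_mul, ← zpow_add, hab]
    rw [← mul_assoc, show ((u ^ (-2:ℤ) : Aˣ) : A) * (u:A) * (u:A) = ((u ^ (-2:ℤ) * u * u : Aˣ) : A) by simp, show u ^ (-2:ℤ) * u * u = 1 by group, Units.val_one]
  have hmain : L * L' = (-(p * q)) • 1 := by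
    rw [hL, hL', mul_assoc, ← mul_assoc _ ((u ^ (-n-1) : Aˣ) : A), (hX (-n-1)).eq,
      mul_assoc, hXY]
    exact hcollapse _ _ 0 (by ring)
  have hmain' : L' * L = (-(p * q)) • 1 := by
    rw [hL', hL, mul_assoc, ← mul_assoc _ ((u ^ (n-1) : Aˣ) : A), (hY (n-1)).eq,
      mul_assoc, hYX]
    exact hcollapse _ _ 0 (by ring)
  have h1 : L * ((-(p*q)⁻¹) • L') = 1 := by
    rw [mul_smul_comm, hmain, smul_smul, neg_mul_neg, inv_mul_cancel₀ hpq, one_smul]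
  have h1' : ((-(p*q)⁻¹) • L') * L = 1 := by
    rw [smul_mul_assoc, hmain', smul_smul, neg_mul_neg, inv_mul_cancel₀ hpq, one_smul]
  exact ⟨hmain, hmain', ⟨L, _, h1, h1'⟩, rfl, rfl⟩
end

section
/- For every n ∈ ℤ, the symmetric Bol symbol Lₙ := P^{n−1}·C is a unit of A and its inverse is L₋ₙ = P^{−n−1}·C; that is, (P^{n−1}·C)·(P^{−n−1}·C) = 1 = (P^{−n−1}·C)·(P^{n−1}·C). (This realizes the inversion property (Lₙ^{sym})⁻¹ = L₋ₙ^{sym} of the symmetric Bol symbols Lₙ^{sym}(𝓡) = {∇,∇̄}^{n−1}[∇,∇̄].) -/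
/-- In an associative unital ring `A`, given `d, d̄` with `d² = 0` and
`d̄² = 0`, `P := d·d̄ + d̄·d` a unit (witnessed by `u : Aˣ`) and `C := d·d̄ − d̄·d`,
for every `n ∈ ℤ` the symmetric Bol symbol `Lₙ := P^{n−1}·C` is a unit of `A` with
inverse `L₋ₙ = P^{−n−1}·C`; that is,
`(P^{n−1}·C)·(P^{−n−1}·C) = 1 = (P^{−n−1}·C)·(P^{n−1}·C)`. -/
theorem symmetric_bol_symbol_inversion
    {A : Type*} [Ring A] (d db : A) (hd : d ^ 2 = 0) (hdb : db ^ 2 = 0)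
    (u : Aˣ) (hu : (u : A) = d * db + db * d) (n : ℤ) :
    (((u ^ (n - 1) : Aˣ) : A) * (d * db - db * d)) *
      (((u ^ (-n - 1) : Aˣ) : A) * (d * db - db * d)) = 1 ∧
    (((u ^ (-n - 1) : Aˣ) : A) * (d * db - db * d)) *
      (((u ^ (n - 1) : Aˣ) : A) * (d * db - db * d)) = 1 := by
  set C := d * db - db * d with hC
  have hcross1 : d * db * (db * d) = 0 := by
    have : d * (db * db) * d = 0 := by
      rw [← pow_two db, hdb]; simp
    calc d * db * (db * d) = d * (db * db) * d := by noncomm_ring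
    _ = 0 := this
  have hcross2 : db * d * (d * db) = 0 := by
    have : db * (d * d) * db = 0 := by
      rw [← pow_two d, hd]; simp
    calc db * d * (d * db) = db * (d * d) * db := by noncomm_ring
    _ = 0 := this
  have hcomm : Commute C (u : A) := by
    show C * u = u * C
    rw [hu, hC]
    have e1 : (d * db - db * d) * (d * db + db * d) =
        d * db * (d * db) - db * d * (db * d) + (d * db * (db * d) - db * d * (d * db)) := by
      noncomm_ring
    have e2 : (d * db + db * d) * (d * db - db * d) =
        d * db * (d * db) - db * d * (db * d) + (db * d * (d * db) - d * db * (db * d)) := by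
      noncomm_ring
    rw [e1, e2, hcross1, hcross2]
  have hC2 : C * C = (u : A) * u := by
    rw [hu, hC]
    have e1 : (d * db - db * d) * (d * db - db * d) =
        d * db * (d * db) + db * d * (db * d) - (d * db * (db * d) + db * d * (d * db)) := by
      noncomm_ring
    have e2 : (d * db + db * d) * (d * db + db * d) =
        d * db * (d * db) + db * d * (db * d) + (d * db * (db * d) + db * d * (d * db)) := by
      noncomm_ring
    rw [e1, e2, hcross1, hcross2]
    abel
  have key : ∀ a b : ℤ, a + b = -2 →
      (((u ^ a : Aˣ) : A) * C) * (((u ^ b : Aˣ) : A) * C) = 1 := by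
    intro a b hab
    have h1 : Commute C ((u ^ b : Aˣ) : A) := hcomm.units_zpow_right b
    calc (((u ^ a : Aˣ) : A) * C) * (((u ^ b : Aˣ) : A) * C)
        = ((u ^ a : Aˣ) : A) * (C * ((u ^ b : Aˣ) : A)) * C := by noncomm_ring
      _ = ((u ^ a : Aˣ) : A) * (((u ^ b : Aˣ) : A) * C) * C := by rw [h1.eq]
      _ = ((u ^ a : Aˣ) : A) * ((u ^ b : Aˣ) : A) * (C * C) := by noncomm_ring
      _ = ((u ^ (a + b) : Aˣ) : A) * (C * C) := by rw [zpow_add]; norm_cast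
      _ = ((u ^ (-2 : ℤ) : Aˣ) : A) * ((u : A) * u) := by rw [hab, hC2]
      _ = ((u ^ (-2 : ℤ) : Aˣ) : A) * ((u ^ (2 : ℤ) : Aˣ) : A) := by
          congr 1
          rw [zpow_two, Units.val_mul]
      _ = ((u ^ ((-2 : ℤ) + 2) : Aˣ) : A) := by rw [zpow_add]; norm_cast
      _ = 1 := by norm_num
  exact ⟨key _ _ (by ring), key _ _ (by ring)⟩
end

section
/- In the component model of N=2 superspace, let B and B̄ be odd elements of A, let p, q ∈ ℝ, and set ∇ := D − q·M_B (in weight (p,q)) and ∇̄ := D̄ − p·M_{B̄}. Then the anticommutator of the supercovariant derivatives along the weight chain is given by (D̄ − (p+1)M_{B̄})∘(D − q·M_B) + (D − (q+1)M_B)∘(D̄ − p·M_{B̄}) = ∂ − M_B∘D̄ − M_{B̄}∘D − p·M_{(DB̄)} − q·M_{(D̄B)} + (p−q)·M_{B·B̄} (equality of ℝ-linear operators on A). -/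
open scoped ContDiff

/-- A superfield of `N=2` superspace in components:
`f = a + θ·α + θ̄·β + θθ̄·b` with `a, α, β, b` smooth functions of `z`. -/
structure SF : Type where
  a : ℝ → ℝ
  al : ℝ → ℝ
  be : ℝ → ℝ
  b : ℝ → ℝ
  ha : ContDiff ℝ ∞ a
  hal : ContDiff ℝ ∞ al
  hbe : ContDiff ℝ ∞ be
  hb : ContDiff ℝ ∞ b

namespace SF

lemma derivSmooth {f : ℝ → ℝ} (hf : ContDiff ℝ ∞ f) : ContDiff ℝ ∞ (deriv f) :=
  (contDiff_infty_iff_deriv.mp hf).2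

noncomputable instance : Zero SF :=
  ⟨⟨fun _ => 0, fun _ => 0, fun _ => 0, fun _ => 0,
    contDiff_const, contDiff_const, contDiff_const, contDiff_const⟩⟩

noncomputable instance : Add SF :=
  ⟨fun f g =>
    ⟨fun z => f.a z + g.a z, fun z => f.al z + g.al z,
     fun z => f.be z + g.be z, fun z => f.b z + g.b z,
     f.ha.add g.ha, f.hal.add g.hal, f.hbe.add g.hbe, f.hb.add g.hb⟩⟩

noncomputable instance : Sub SF :=
  ⟨fun f g =>
    ⟨fun z => f.a z - g.a z, fun z => f.al z - g.al z,
     fun z => f.be z - g.be z, fun z => f.b z - g.b z,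
     f.ha.sub g.ha, f.hal.sub g.hal, f.hbe.sub g.hbe, f.hb.sub g.hb⟩⟩

noncomputable instance : SMul ℝ SF :=
  ⟨fun c f =>
    ⟨fun z => c * f.a z, fun z => c * f.al z, fun z => c * f.be z, fun z => c * f.b z,
     contDiff_const.mul f.ha, contDiff_const.mul f.hal,
     contDiff_const.mul f.hbe, contDiff_const.mul f.hb⟩⟩

/-- Grassmann multiplication on `A = C^∞(ℝ) ⊗ Λ[θ,θ̄]`. -/
noncomputable instance : Mul SF :=
  ⟨fun f g =>
    ⟨fun z => f.a z * g.a z,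
     fun z => f.al z * g.a z + f.a z * g.al z,
     fun z => f.be z * g.a z + f.a z * g.be z,
     fun z => f.b z * g.a z + f.a z * g.b z + f.al z * g.be z - f.be z * g.al z,
     f.ha.mul g.ha,
     (f.hal.mul g.ha).add (f.ha.mul g.hal),
     (f.hbe.mul g.ha).add (f.ha.mul g.hbe),
     (((f.hb.mul g.ha).add (f.ha.mul g.hb)).add (f.hal.mul g.hbe)).sub
       (f.hbe.mul g.hal)⟩⟩

/-- The even derivative `∂ = ∂/∂z`. -/
noncomputable def pa (f : SF) : SF :=
  ⟨deriv f.a, deriv f.al, deriv f.be, deriv f.b,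
   derivSmooth f.ha, derivSmooth f.hal, derivSmooth f.hbe, derivSmooth f.hb⟩

/-- The supersymmetry derivative `D = ∂/∂θ + (1/2)θ̄∂` in components. -/
noncomputable def Dop (f : SF) : SF :=
  ⟨f.al, fun _ => 0, fun z => f.b z + deriv f.a z / 2, fun z => -(deriv f.al z / 2),
   f.hal, contDiff_const,
   f.hb.add ((derivSmooth f.ha).div_const 2),
   ((derivSmooth f.hal).div_const 2).neg⟩

/-- The supersymmetry derivative `D̄ = ∂/∂θ̄ + (1/2)θ∂` in components. -/
noncomputable def Dbop (f : SF) : SF :=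
  ⟨f.be, fun z => deriv f.a z / 2 - f.b z, fun _ => 0, fun z => deriv f.be z / 2,
   f.hbe, ((derivSmooth f.ha).div_const 2).sub f.hb, contDiff_const,
   (derivSmooth f.hbe).div_const 2⟩

/-- `f` is odd iff `f = θ·b₁ + θ̄·b₂`, i.e. its even components vanish. -/
def IsOdd (f : SF) : Prop := (∀ z, f.a z = 0) ∧ (∀ z, f.b z = 0)

end SF


namespace SFAux

lemma ext' {f g : SF} (h1 : f.a = g.a) (h2 : f.al = g.al) (h3 : f.be = g.be)
    (h4 : f.b = g.b) : f = g := by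
  cases f; cases g; cases h1; cases h2; cases h3; cases h4; rfl

lemma sub_a (f g : SF) : (f - g).a = fun z => f.a z - g.a z := rfl
lemma sub_al (f g : SF) : (f - g).al = fun z => f.al z - g.al z := rfl
lemma sub_be (f g : SF) : (f - g).be = fun z => f.be z - g.be z := rfl
lemma sub_b (f g : SF) : (f - g).b = fun z => f.b z - g.b z := rfl
lemma add_a (f g : SF) : (f + g).a = fun z => f.a z + g.a z := rfl
lemma add_al (f g : SF) : (f + g).al = fun z => f.al z + g.al z := rfl
lemma add_be (f g : SF) : (f + g).be = fun z => f.be z + g.be z := rfl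
lemma add_b (f g : SF) : (f + g).b = fun z => f.b z + g.b z := rfl
lemma smul_a (c : ℝ) (f : SF) : (c • f).a = fun z => c * f.a z := rfl
lemma smul_al (c : ℝ) (f : SF) : (c • f).al = fun z => c * f.al z := rfl
lemma smul_be (c : ℝ) (f : SF) : (c • f).be = fun z => c * f.be z := rfl
lemma smul_b (c : ℝ) (f : SF) : (c • f).b = fun z => c * f.b z := rfl
lemma mul_a (f g : SF) : (f * g).a = fun z => f.a z * g.a z := rfl
lemma mul_al (f g : SF) : (f * g).al = fun z => f.al z * g.a z + f.a z * g.al z := rfl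
lemma mul_be (f g : SF) : (f * g).be = fun z => f.be z * g.a z + f.a z * g.be z := rfl
lemma mul_b (f g : SF) :
    (f * g).b = fun z => f.b z * g.a z + f.a z * g.b z + f.al z * g.be z - f.be z * g.al z := rfl
lemma pa_a (f : SF) : (SF.pa f).a = deriv f.a := rfl
lemma pa_al (f : SF) : (SF.pa f).al = deriv f.al := rfl
lemma pa_be (f : SF) : (SF.pa f).be = deriv f.be := rfl
lemma pa_b (f : SF) : (SF.pa f).b = deriv f.b := rfl
lemma Dop_a (f : SF) : (SF.Dop f).a = f.al := rfl
lemma Dop_al (f : SF) : (SF.Dop f).al = fun _ => 0 := rfl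
lemma Dop_be (f : SF) : (SF.Dop f).be = fun z => f.b z + deriv f.a z / 2 := rfl
lemma Dop_b (f : SF) : (SF.Dop f).b = fun z => -(deriv f.al z / 2) := rfl
lemma Dbop_a (f : SF) : (SF.Dbop f).a = f.be := rfl
lemma Dbop_al (f : SF) : (SF.Dbop f).al = fun z => deriv f.a z / 2 - f.b z := rfl
lemma Dbop_be (f : SF) : (SF.Dbop f).be = fun _ => 0 := rfl
lemma Dbop_b (f : SF) : (SF.Dbop f).b = fun z => deriv f.be z / 2 := rfl

end SFAux

/-- In the component model of `N=2` superspace, for odd `B, B̄ ∈ A`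
and `p, q ∈ ℝ`, the anticommutator of the supercovariant derivatives
`∇ = D − q·M_B`, `∇̄ = D̄ − p·M_{B̄}` along the weight chain is
`(D̄ − (p+1)M_{B̄})∘(D − q·M_B) + (D − (q+1)M_B)∘(D̄ − p·M_{B̄})
  = ∂ − M_B∘D̄ − M_{B̄}∘D − p·M_{(DB̄)} − q·M_{(D̄B)} + (p−q)·M_{B·B̄}`
(equality of `ℝ`-linear operators on `A`). -/

theorem supercovariant_anticommutator (B Bb : SF) (hB : B.IsOdd) (hBb : Bb.IsOdd)
    (p q : ℝ) :
    ∀ f : SF,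
      (SF.Dbop (SF.Dop f - q • (B * f)) - (p + 1) • (Bb * (SF.Dop f - q • (B * f)))) +
        (SF.Dop (SF.Dbop f - p • (Bb * f)) - (q + 1) • (B * (SF.Dbop f - p • (Bb * f)))) =
      SF.pa f - B * SF.Dbop f - Bb * SF.Dop f - p • (SF.Dop Bb * f) - q • (SF.Dbop B * f)
        + (p - q) • ((B * Bb) * f) := by
  obtain ⟨hBa, hBb0⟩ := hB
  obtain ⟨hBba, hBbb0⟩ := hBb
  have hBa' : B.a = fun _ => 0 := funext hBa
  have hBb' : B.b = fun _ => 0 := funext hBb0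
  have hBba' : Bb.a = fun _ => 0 := funext hBba
  have hBbb' : Bb.b = fun _ => 0 := funext hBbb0
  intro f
  have hfa : Differentiable ℝ f.a := (contDiff_infty_iff_deriv.mp f.ha).1
  have hfa' : Differentiable ℝ (deriv f.a) :=
    (contDiff_infty_iff_deriv.mp (SF.derivSmooth f.ha)).1
  have hfal : Differentiable ℝ f.al := (contDiff_infty_iff_deriv.mp f.hal).1
  have hfbe : Differentiable ℝ f.be := (contDiff_infty_iff_deriv.mp f.hbe).1
  have hfb : Differentiable ℝ f.b := (contDiff_infty_iff_deriv.mp f.hb).1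
  have hb1 : Differentiable ℝ B.al := (contDiff_infty_iff_deriv.mp B.hal).1
  have hb2 : Differentiable ℝ B.be := (contDiff_infty_iff_deriv.mp B.hbe).1
  have hc1 : Differentiable ℝ Bb.al := (contDiff_infty_iff_deriv.mp Bb.hal).1
  have hc2 : Differentiable ℝ Bb.be := (contDiff_infty_iff_deriv.mp Bb.hbe).1
  apply SFAux.ext' <;> funext z <;>
    simp only [SFAux.sub_a, SFAux.sub_al, SFAux.sub_be, SFAux.sub_b,
      SFAux.add_a, SFAux.add_al, SFAux.add_be, SFAux.add_b,
      SFAux.smul_a, SFAux.smul_al, SFAux.smul_be, SFAux.smul_b,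
      SFAux.mul_a, SFAux.mul_al, SFAux.mul_be, SFAux.mul_b,
      SFAux.pa_a, SFAux.pa_al, SFAux.pa_be, SFAux.pa_b,
      SFAux.Dop_a, SFAux.Dop_al, SFAux.Dop_be, SFAux.Dop_b,
      SFAux.Dbop_a, SFAux.Dbop_al, SFAux.Dbop_be, SFAux.Dbop_b,
      hBa', hBb', hBba', hBbb'] <;>
    simp (disch := fun_prop)
      only [deriv_const', deriv_fun_sub, deriv_fun_add, deriv_fun_mul, deriv_const_mul, deriv_div_const,
        mul_zero, zero_mul, add_zero, zero_add, sub_zero, zero_sub, neg_zero, deriv_neg] <;>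
    ring
end

section
/- In the component model of N=2 superspace, let B and B̄ be odd elements of A satisfying the chirality conditions (DB) = 0 and (D̄B̄) = 0, and let R := (DB̄) − (D̄B) − B·B̄ be the superprojective connection given by the super Miura transformation. Then the antichiral Bol operator of order 2 depends on B, B̄ only through R: D̄∘(D − M_B)∘(D̄ + M_{B̄})∘D = D̄∘(∂ + M_R)∘D (equality of ℝ-linear operators on A). This is the identity D̄K₁D with K₁ = ∂ + 𝓡. -/
open scoped ContDiff

lemma SF.ext4 {f g : SF} (h1 : f.a = g.a) (h2 : f.al = g.al) (h3 : f.be = g.be)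
    (h4 : f.b = g.b) : f = g := by
  cases f; cases g; simp_all

lemma SF.mul_a' (f g : SF) : (f * g).a = fun z => f.a z * g.a z := rfl
lemma SF.mul_al' (f g : SF) : (f * g).al = fun z => f.al z * g.a z + f.a z * g.al z := rfl
lemma SF.mul_be' (f g : SF) : (f * g).be = fun z => f.be z * g.a z + f.a z * g.be z := rfl
lemma SF.mul_b' (f g : SF) :
    (f * g).b = fun z => f.b z * g.a z + f.a z * g.b z + f.al z * g.be z - f.be z * g.al z := rfl
lemma SF.add_a' (f g : SF) : (f + g).a = fun z => f.a z + g.a z := rfl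
lemma SF.add_al' (f g : SF) : (f + g).al = fun z => f.al z + g.al z := rfl
lemma SF.add_be' (f g : SF) : (f + g).be = fun z => f.be z + g.be z := rfl
lemma SF.add_b' (f g : SF) : (f + g).b = fun z => f.b z + g.b z := rfl
lemma SF.sub_a' (f g : SF) : (f - g).a = fun z => f.a z - g.a z := rfl
lemma SF.sub_al' (f g : SF) : (f - g).al = fun z => f.al z - g.al z := rfl
lemma SF.sub_be' (f g : SF) : (f - g).be = fun z => f.be z - g.be z := rfl
lemma SF.sub_b' (f g : SF) : (f - g).b = fun z => f.b z - g.b z := rfl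
lemma SF.zero_a' : (0 : SF).a = fun _ => 0 := rfl
lemma SF.zero_al' : (0 : SF).al = fun _ => 0 := rfl
lemma SF.zero_be' : (0 : SF).be = fun _ => 0 := rfl
lemma SF.zero_b' : (0 : SF).b = fun _ => 0 := rfl
lemma SF.Dop_a' (f : SF) : f.Dop.a = f.al := rfl
lemma SF.Dop_al' (f : SF) : f.Dop.al = fun _ => 0 := rfl
lemma SF.Dop_be' (f : SF) : f.Dop.be = fun z => f.b z + deriv f.a z / 2 := rfl
lemma SF.Dop_b' (f : SF) : f.Dop.b = fun z => -(deriv f.al z / 2) := rfl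
lemma SF.Dbop_a' (f : SF) : f.Dbop.a = f.be := rfl
lemma SF.Dbop_al' (f : SF) : f.Dbop.al = fun z => deriv f.a z / 2 - f.b z := rfl
lemma SF.Dbop_be' (f : SF) : f.Dbop.be = fun _ => 0 := rfl
lemma SF.Dbop_b' (f : SF) : f.Dbop.b = fun z => deriv f.be z / 2 := rfl
lemma SF.pa_a' (f : SF) : f.pa.a = deriv f.a := rfl
lemma SF.pa_al' (f : SF) : f.pa.al = deriv f.al := rfl
lemma SF.pa_be' (f : SF) : f.pa.be = deriv f.be := rfl
lemma SF.pa_b' (f : SF) : f.pa.b = deriv f.b := rfl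

/-- In the component model of `N=2` superspace, for odd `B, B̄ ∈ A`
satisfying the chirality conditions `(DB) = 0`, `(D̄B̄) = 0`, and with
`R := (DB̄) − (D̄B) − B·B̄` the superprojective connection given by the super Miura
transformation, the antichiral Bol operator of order 2 depends on `B, B̄` only
through `R`:
`D̄∘(D − M_B)∘(D̄ + M_{B̄})∘D = D̄∘(∂ + M_R)∘D`
(equality of `ℝ`-linear operators on `A`).  This is `D̄K₁D` with `K₁ = ∂ + 𝓡`. -/
theorem antichiral_bol_operator_order_two (B Bb : SF) (hB : B.IsOdd) (hBb : Bb.IsOdd)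
    (hchirB : SF.Dop B = 0) (hchirBb : SF.Dbop Bb = 0)
    (R : SF) (hR : R = SF.Dop Bb - SF.Dbop B - B * Bb) :
    ∀ f : SF,
      SF.Dbop (SF.Dop (SF.Dbop (SF.Dop f) + Bb * SF.Dop f)
          - B * (SF.Dbop (SF.Dop f) + Bb * SF.Dop f)) =
      SF.Dbop (SF.pa (SF.Dop f) + R * SF.Dop f) := by
  intro f
  subst hR
  obtain ⟨hBa, hBb0⟩ := hB
  obtain ⟨hBba, hBbb0⟩ := hBb
  have eBa : B.a = fun _ => 0 := funext hBa
  have eBb : B.b = fun _ => 0 := funext hBb0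
  have eBba : Bb.a = fun _ => 0 := funext hBba
  have eBbb : Bb.b = fun _ => 0 := funext hBbb0
  have eBal : B.al = fun _ => 0 := congrArg SF.a hchirB
  have eBbbe : Bb.be = fun _ => 0 := congrArg SF.a hchirBb
  set p := Bb.al with hp
  set q := B.be with hq
  have hps : ContDiff ℝ ∞ p := Bb.hal
  have hqs : ContDiff ℝ ∞ q := B.hbe
  have dps : Differentiable ℝ p := hps.differentiable (by norm_num)
  have dqs : Differentiable ℝ q := hqs.differentiable (by norm_num)
  have da : Differentiable ℝ f.a := f.ha.differentiable (by norm_num)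
  have dal : Differentiable ℝ f.al := f.hal.differentiable (by norm_num)
  have dbe : Differentiable ℝ f.be := f.hbe.differentiable (by norm_num)
  have db : Differentiable ℝ f.b := f.hb.differentiable (by norm_num)
  have da' : Differentiable ℝ (deriv f.a) :=
    (SF.derivSmooth f.ha).differentiable (by norm_num)
  have dal' : Differentiable ℝ (deriv f.al) :=
    (SF.derivSmooth f.hal).differentiable (by norm_num)
  apply SF.ext4 <;>
    simp only [SF.mul_a', SF.mul_al', SF.mul_be', SF.mul_b', SF.add_a', SF.add_al',
      SF.add_be', SF.add_b', SF.sub_a', SF.sub_al', SF.sub_be', SF.sub_b',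
      SF.Dop_a', SF.Dop_al', SF.Dop_be', SF.Dop_b', SF.Dbop_a', SF.Dbop_al',
      SF.Dbop_be', SF.Dbop_b', SF.pa_a', SF.pa_al', SF.pa_be', SF.pa_b',
      eBa, eBb, eBal, eBba, eBbb, eBbbe, ← hp, ← hq, zero_mul, mul_zero, add_zero,
      zero_add, sub_zero, zero_sub, neg_zero, zero_div, neg_neg, sub_neg_eq_add, add_halves,
      deriv_const']
  case h1 =>
    funext z
    ring
  case h2 =>
    funext z
    have d2 : deriv (fun z => deriv f.al z + p z * f.al z) z
        = deriv (deriv f.al) z + (deriv p z * f.al z + p z * deriv f.al z) := by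
      rw [deriv_fun_add (g := fun y => p y * f.al y) (dal' z) ((dps z).mul (dal z)), deriv_fun_mul (dps z) (dal z)]
    have d3 : deriv (fun z => deriv f.al z + (p z - q z) * f.al z) z
        = deriv (deriv f.al) z
          + ((deriv p z - deriv q z) * f.al z + (p z - q z) * deriv f.al z) := by
      rw [deriv_fun_add (g := fun y => (p y - q y) * f.al y) (dal' z) (((dps z).sub (dqs z)).mul (dal z)),
        deriv_fun_mul (c := fun y => p y - q y) ((dps z).sub (dqs z)) (dal z), deriv_fun_sub (dps z) (dqs z)]
    have d4 : deriv (fun z => -(deriv f.al z / 2)) z = -(deriv (deriv f.al) z / 2) := by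
      rw [deriv.fun_neg, deriv_div_const]
    rw [d2, d3, d4]
    ring
  case h4 =>
    have key : (fun z => deriv (fun z => f.b z + deriv f.a z / 2) z / 2
          + p z * (f.b z + deriv f.a z / 2)
          + deriv (fun z => f.b z + deriv f.a z / 2) z / 2
          - q z * (f.b z + deriv f.a z / 2))
        = (fun z => deriv (fun z => f.b z + deriv f.a z / 2) z
          + (p z - q z) * (f.b z + deriv f.a z / 2)) := by
      funext w; ring
    funext z
    rw [key]
end

section
/- In the component model of N=2 superspace, let B and B̄ be odd elements of A satisfying the chirality conditions (DB) = 0 and (D̄B̄) = 0, and let R := (DB̄) − (D̄B) − B·B̄ be the superprojective connection given by the super Miura transformation. Then the chiral Bol operator of order 2 depends on B, B̄ only through R: D∘(D̄ − M_{B̄})∘(D + M_B)∘D̄ = D∘(∂ − M_R)∘D̄ (equality of ℝ-linear operators on A). This is the identity DJ₁D̄ with J₁ = ∂ − 𝓡. -/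
open scoped ContDiff

namespace SF

lemma ext' {f g : SF} (h1 : f.a = g.a) (h2 : f.al = g.al)
    (h3 : f.be = g.be) (h4 : f.b = g.b) : f = g := by
  cases f; cases g; simp_all

@[simp] lemma mul_a (f g : SF) : (f * g).a = fun z => f.a z * g.a z := rfl
@[simp] lemma mul_al (f g : SF) :
    (f * g).al = fun z => f.al z * g.a z + f.a z * g.al z := rfl
@[simp] lemma mul_be (f g : SF) :
    (f * g).be = fun z => f.be z * g.a z + f.a z * g.be z := rfl
@[simp] lemma mul_b (f g : SF) :
    (f * g).b = fun z => f.b z * g.a z + f.a z * g.b z + f.al z * g.be z - f.be z * g.al z := rfl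
@[simp] lemma add_a (f g : SF) : (f + g).a = fun z => f.a z + g.a z := rfl
@[simp] lemma add_al (f g : SF) : (f + g).al = fun z => f.al z + g.al z := rfl
@[simp] lemma add_be (f g : SF) : (f + g).be = fun z => f.be z + g.be z := rfl
@[simp] lemma add_b (f g : SF) : (f + g).b = fun z => f.b z + g.b z := rfl
@[simp] lemma sub_a (f g : SF) : (f - g).a = fun z => f.a z - g.a z := rfl
@[simp] lemma sub_al (f g : SF) : (f - g).al = fun z => f.al z - g.al z := rfl
@[simp] lemma sub_be (f g : SF) : (f - g).be = fun z => f.be z - g.be z := rfl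
@[simp] lemma sub_b (f g : SF) : (f - g).b = fun z => f.b z - g.b z := rfl
@[simp] lemma pa_a (f : SF) : (pa f).a = deriv f.a := rfl
@[simp] lemma pa_al (f : SF) : (pa f).al = deriv f.al := rfl
@[simp] lemma pa_be (f : SF) : (pa f).be = deriv f.be := rfl
@[simp] lemma pa_b (f : SF) : (pa f).b = deriv f.b := rfl
@[simp] lemma Dop_a (f : SF) : (Dop f).a = f.al := rfl
@[simp] lemma Dop_al (f : SF) : (Dop f).al = fun _ => 0 := rfl
@[simp] lemma Dop_be (f : SF) : (Dop f).be = fun z => f.b z + deriv f.a z / 2 := rfl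
@[simp] lemma Dop_b (f : SF) : (Dop f).b = fun z => -(deriv f.al z / 2) := rfl
@[simp] lemma Dbop_a (f : SF) : (Dbop f).a = f.be := rfl
@[simp] lemma Dbop_al (f : SF) : (Dbop f).al = fun z => deriv f.a z / 2 - f.b z := rfl
@[simp] lemma Dbop_be (f : SF) : (Dbop f).be = fun _ => 0 := rfl
@[simp] lemma Dbop_b (f : SF) : (Dbop f).b = fun z => deriv f.be z / 2 := rfl
@[simp] lemma zero_a : (0 : SF).a = fun _ => 0 := rfl

lemma diffble {f : ℝ → ℝ} (hf : ContDiff ℝ ∞ f) : Differentiable ℝ f :=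
  (contDiff_infty_iff_deriv.mp hf).1

end SF

/-- In the component model of `N=2` superspace, for odd `B, B̄ ∈ A`
satisfying the chirality conditions `(DB) = 0`, `(D̄B̄) = 0`, and with
`R := (DB̄) − (D̄B) − B·B̄` the superprojective connection given by the super Miura
transformation, the chiral Bol operator of order 2 depends on `B, B̄` only
through `R`:
`D∘(D̄ − M_{B̄})∘(D + M_B)∘D̄ = D∘(∂ − M_R)∘D̄`
(equality of `ℝ`-linear operators on `A`).  This is `DJ₁D̄` with `J₁ = ∂ − 𝓡`. -/
theorem chiral_bol_operator_order_two (B Bb : SF) (hB : B.IsOdd) (hBb : Bb.IsOdd)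
    (hchirB : SF.Dop B = 0) (hchirBb : SF.Dbop Bb = 0)
    (R : SF) (hR : R = SF.Dop Bb - SF.Dbop B - B * Bb) :
    ∀ f : SF,
      SF.Dop (SF.Dbop (SF.Dop (SF.Dbop f) + B * SF.Dbop f)
          - Bb * (SF.Dop (SF.Dbop f) + B * SF.Dbop f)) =
      SF.Dop (SF.pa (SF.Dbop f) - R * SF.Dbop f) := by

  subst hR
  obtain ⟨hBa, hBb0⟩ := hB
  obtain ⟨hBba, hBbb⟩ := hBb
  have hBal : B.al = fun _ => 0 := funext fun z => congrArg (fun s => SF.a s z) hchirB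
  have hBbbe : Bb.be = fun _ => 0 := funext fun z => congrArg (fun s => SF.a s z) hchirBb
  have hBa' : B.a = fun _ => 0 := funext hBa
  have hBb0' : B.b = fun _ => 0 := funext hBb0
  have hBba' : Bb.a = fun _ => 0 := funext hBba
  have hBbb' : Bb.b = fun _ => 0 := funext hBbb
  intro f
  have dp : Differentiable ℝ f.be := SF.diffble f.hbe
  have dp' : Differentiable ℝ (deriv f.be) := SF.diffble (SF.derivSmooth f.hbe)
  have dbe : Differentiable ℝ B.be := SF.diffble B.hbe
  have dga : Differentiable ℝ Bb.al := SF.diffble Bb.hal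
  have dfa' : Differentiable ℝ (deriv f.a) := SF.diffble (SF.derivSmooth f.ha)
  have dfb : Differentiable ℝ f.b := SF.diffble f.hb
  apply SF.ext' <;>
    simp only [SF.mul_a, SF.mul_al, SF.mul_be, SF.mul_b, SF.add_a, SF.add_al, SF.add_be,
      SF.add_b, SF.sub_a, SF.sub_al, SF.sub_be, SF.sub_b, SF.pa_a, SF.pa_al, SF.pa_be,
      SF.pa_b, SF.Dop_a, SF.Dop_al, SF.Dop_be, SF.Dop_b, SF.Dbop_a, SF.Dbop_al,
      SF.Dbop_be, SF.Dbop_b, hBal, hBbbe, hBa', hBb0', hBba', hBbb'] <;>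
    funext z <;>
    simp only [zero_mul, mul_zero, add_zero, zero_add, sub_zero, zero_sub, zero_div,
      neg_zero, zero_mul, mul_zero, deriv_const']
  · ring
  · have e1 : deriv (fun z => deriv f.be z / 2 + deriv f.be z / 2 + B.be z * f.be z) z
        = deriv (deriv f.be) z / 2 + deriv (deriv f.be) z / 2
          + (deriv B.be z * f.be z + B.be z * deriv f.be z) := by
      rw [deriv_fun_add (f := fun z => deriv f.be z / 2 + deriv f.be z / 2)
            (g := fun z => B.be z * f.be z) (((dp'.div_const 2).add (dp'.div_const 2)) z)
            ((dbe.mul dp) z),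
          deriv_fun_add (f := fun z => deriv f.be z / 2) (g := fun z => deriv f.be z / 2)
            ((dp'.div_const 2) z) ((dp'.div_const 2) z),
          deriv_fun_mul (dbe z) (dp z), deriv_div_const]
    have e2 : deriv (fun z => deriv f.be z / 2) z = deriv (deriv f.be) z / 2 :=
      deriv_div_const _
    have e3 : deriv (fun z => deriv f.be z - (Bb.al z - B.be z) * f.be z) z
        = deriv (deriv f.be) z
          - ((deriv Bb.al z - deriv B.be z) * f.be z + (Bb.al z - B.be z) * deriv f.be z) := by
      rw [deriv_fun_sub (f := deriv f.be) (g := fun z => (Bb.al z - B.be z) * f.be z)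
            (dp' z) (((dga.sub dbe).mul dp) z),
          deriv_fun_mul (c := fun z => Bb.al z - B.be z) ((dga.sub dbe) z) (dp z),
          deriv_fun_sub (dga z) (dbe z)]
    rw [e1, e2, e3]; ring
  · have hfg : (fun z => deriv (fun z => deriv f.a z / 2 - f.b z) z / 2 -
          (-(deriv (fun z => deriv f.a z / 2 - f.b z) z / 2)
            + -(B.be z * (deriv f.a z / 2 - f.b z)))
          - Bb.al z * (deriv f.a z / 2 - f.b z))
        = (fun z => deriv (fun z => deriv f.a z / 2 - f.b z) z
            - (Bb.al z - B.be z) * (deriv f.a z / 2 - f.b z)) := by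
      funext w; ring
    rw [hfg]
end
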